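/- arXiv:quant-ph/9806065 — 3 statements merged into one kernel-verified Lean document; each statement's English description precedes it below -/
import Mathlib

section
/- Let ρ^{R₁Q₁R₂Q₂} be a state with coherent information I(ρ) := S(ρ^{Q₁Q₂}) - S(ρ^{R₁Q₁R₂Q₂}) and marginal coherent informations I₁ := S(ρ^{Q₁}) - S(ρ^{R₁Q₁}) and I₂ := S(ρ^{Q₂}) - S(ρ^{R₂Q₂}). Then I(ρ) ≥ I₁ + I₂. -/
/-- Superadditivity of coherent information over marginals, purely in terms of entropies of
reductions of a four-part state on `R₁ Q₁ R₂ Q₂` (labelled `0,1,2,3`), with strong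
subadditivity assumed (submodular form): with `I = S(Q₁Q₂) - S(R₁Q₁R₂Q₂)`,
`I₁ = S(Q₁) - S(R₁Q₁)`, `I₂ = S(Q₂) - S(R₂Q₂)`, we have `I ≥ I₁ + I₂`. -/
theorem stmt9 (S : Finset (Fin 4) → ℝ)
    (hssa : ∀ A B : Finset (Fin 4), S (A ∪ B) + S (A ∩ B) ≤ S A + S B) :
    S {1, 3} - S {0, 1, 2, 3} ≥ (S {1} - S {0, 1}) + (S {3} - S {2, 3}) := by
  have h1 := hssa {0, 1} {1, 3}
  have h2 := hssa {0, 1, 3} {2, 3}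
  have e1 : ({0, 1} : Finset (Fin 4)) ∪ {1, 3} = {0, 1, 3} := by decide
  have e2 : ({0, 1} : Finset (Fin 4)) ∩ {1, 3} = {1} := by decide
  have e3 : ({0, 1, 3} : Finset (Fin 4)) ∪ {2, 3} = {0, 1, 2, 3} := by decide
  have e4 : ({0, 1, 3} : Finset (Fin 4)) ∩ {2, 3} = {3} := by decide
  rw [e1, e2] at h1
  rw [e3, e4] at h2
  linarith
end

section
/- Superadditivity over n marginals: for a 2n-part density operator ρ on H_{R₁} ⊗ H_{Q₁} ⊗ ⋯ ⊗ H_{R_n} ⊗ H_{Q_n}, one has S(ρ^{Q₁⋯Q_n}) - S(ρ^{R₁Q₁⋯R_nQ_n}) ≥ ∑ᵢ [S(ρ^{Qᵢ}) - S(ρ^{RᵢQᵢ})]. -/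
/-- `n`-fold superadditivity over marginals: for a `2n`-part state on systems
`R₁ Q₁ ⋯ R_n Q_n` (system `Rᵢ = (i, 0)`, `Qᵢ = (i, 1)`), with `S A` the entropy of the
reduction to the subsystems in `A` and strong subadditivity assumed (submodular form),
`S(Q₁⋯Q_n) - S(R₁Q₁⋯R_nQ_n) ≥ ∑ᵢ [S(Qᵢ) - S(RᵢQᵢ)]`. -/
theorem stmt10 (n : ℕ) (S : Finset (Fin n × Fin 2) → ℝ)
    (hssa : ∀ A B : Finset (Fin n × Fin 2), S (A ∪ B) + S (A ∩ B) ≤ S A + S B) :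
    S (Finset.univ.filter (fun p => p.2 = 1)) - S Finset.univ ≥
      ∑ i : Fin n, (S {(i, 1)} - S {(i, 0), (i, 1)}) := by
  set A : ℕ → Finset (Fin n × Fin 2) :=
    fun k => Finset.univ.filter (fun p => p.2 = 1 ∨ (p.1 : ℕ) < k) with hA
  have hA0 : A 0 = Finset.univ.filter (fun p => p.2 = 1) := by
    ext p; simp [hA]
  have hAn : A n = Finset.univ := by
    ext p; simp [hA]
  have key : ∀ i : Fin n, S {(i, 1)} - S {(i, 0), (i, 1)} ≤ S (A i) - S (A (i + 1)) := by
    intro i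
    have h := hssa (A i) {(i, 0), (i, 1)}
    have hu : A i ∪ {(i, 0), (i, 1)} = A ((i : ℕ) + 1) := by
      ext p
      simp only [hA, Finset.mem_union, Finset.mem_filter, Finset.mem_univ, true_and,
        Finset.mem_insert, Finset.mem_singleton]
      constructor
      · rintro ((h1 | h2) | h3 | h3)
        · exact Or.inl h1
        · exact Or.inr (by omega)
        · subst h3; exact Or.inr (by simp)
        · subst h3; exact Or.inl rfl
      · rintro (h1 | h2)
        · exact Or.inl (Or.inl h1)
        · rcases Nat.lt_or_ge (p.1 : ℕ) i with h3 | h3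
          · exact Or.inl (Or.inr h3)
          · have hpi : p.1 = i := Fin.ext (by omega)
            have h4 : p.2 = 0 ∨ p.2 = 1 := by omega
            rcases h4 with h4 | h4
            · exact Or.inr (Or.inl (Prod.ext hpi h4))
            · exact Or.inr (Or.inr (Prod.ext hpi h4))
    have hi : A i ∩ {(i, 0), (i, 1)} = {(i, 1)} := by
      ext p
      simp only [hA, Finset.mem_inter, Finset.mem_filter, Finset.mem_univ, true_and,
        Finset.mem_insert, Finset.mem_singleton]
      constructor
      · rintro ⟨h1 | h1, h2 | h2⟩
        · subst h2; simp at h1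
        · exact h2
        · subst h2; exact absurd h1 (by simp)
        · exact h2
      · rintro rfl
        exact ⟨Or.inl rfl, Or.inr rfl⟩
    rw [hu, hi] at h
    linarith
  calc ∑ i : Fin n, (S {(i, 1)} - S {(i, 0), (i, 1)})
      ≤ ∑ i : Fin n, (S (A i) - S (A ((i : ℕ) + 1))) := Finset.sum_le_sum (fun i _ => key i)
    _ = ∑ i ∈ Finset.range n, (S (A i) - S (A (i + 1))) := by
        rw [Finset.sum_range fun i => S (A i) - S (A (i + 1))]
    _ = S (A 0) - S (A n) := Finset.sum_range_sub' (fun k => S (A k)) n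
    _ = S (Finset.univ.filter (fun p => p.2 = 1)) - S Finset.univ := by rw [hA0, hAn]
end

section
/- The rate-distortion converse for an i.i.d. source with noiseless channel: if (E⁽ⁿ⁾, D⁽ⁿ⁾) is an (n, 2^{nR}) rate-distortion code whose average entanglement distortion is D, and the entanglement information rate-distortion function R^I is defined as the minimum coherent information over single-copy operations with distortion at most D, then R ≥ R^I(D), given: (i) S of any state on the channel block is ≤ nR, (ii) positivity of entropy exchange, (iii) the quantum data processing inequality I_c(ρ, D∘E) ≤ I_c(ρ, E), (iv) superadditivity of coherent information over marginals, and (v) convexity and monotonicity of R^I. -/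
/-- The rate-distortion converse (Theorem 1): for an `(n, 2^{nR})` rate-distortion code
with marginal operations `T i` and average entanglement distortion
`D = (1/n) ∑ᵢ dist (T i)`, we have `R ≥ R^I(D)`, given
(i) the entropy `Sblock` of the encoded state on the channel block is at most `nR`,
(ii) positivity of entropy exchange (`IcE ≤ Sblock` for the coherent information of the
encoding), (iii) the data processing inequality (`IcDE ≤ IcE` for the coherent
information of the full coding), (iv) superadditivity of coherent information over
marginals (`∑ᵢ Ic (T i) ≤ IcDE`), and (v) the defining minimality, convexity and
monotonicity of the entanglement information rate-distortion function `R^I`. -/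
theorem stmt17 {Op : Type*} (n : ℕ) (hn : 0 < n) (R : ℝ)
    (Ic dist : Op → ℝ) (RI : ℝ → ℝ)
    (Sblock IcE IcDE : ℝ) (T : Fin n → Op)
    (hdim : Sblock ≤ (n : ℝ) * R)
    (hex : IcE ≤ Sblock)
    (hdp : IcDE ≤ IcE)
    (hsuper : ∑ i, Ic (T i) ≤ IcDE)
    (hRIdef : ∀ A : Op, RI (dist A) ≤ Ic A)
    (hRIconv : ConvexOn ℝ Set.univ RI)
    (hRImono : Antitone RI)
    (D : ℝ) (hD : D = (1 / (n : ℝ)) * ∑ i, dist (T i)) :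
    RI D ≤ R := by
  have hn' : (0:ℝ) < n := Nat.cast_pos.mpr hn
  have hjensen : RI D ≤ ∑ i, (1/(n:ℝ)) * RI (dist (T i)) := by
    have := hRIconv.map_sum_le (t := Finset.univ) (w := fun _ : Fin n => (1/(n:ℝ)))
      (p := fun i => dist (T i)) (fun i _ => by positivity)
      (by simp [Finset.card_univ]; field_simp) (fun i _ => Set.mem_univ _)
    simpa [hD, Finset.mul_sum, smul_eq_mul] using this
  have h2 : ∑ i, (1/(n:ℝ)) * RI (dist (T i)) ≤ (1/(n:ℝ)) * ∑ i, Ic (T i) := by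
    rw [Finset.mul_sum]
    exact Finset.sum_le_sum fun i _ => by
      have := hRIdef (T i); nlinarith [one_div_pos.mpr hn']
  have h3 : (1/(n:ℝ)) * ∑ i, Ic (T i) ≤ R := by
    rw [div_mul_eq_mul_div, one_mul, div_le_iff₀ hn']
    calc ∑ i, Ic (T i) ≤ Sblock := le_trans hsuper (le_trans hdp hex)
      _ ≤ (n:ℝ) * R := hdim
      _ = R * n := mul_comm _ _
  linarith
end
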